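/- Define, for each integer N ≥ 1, T(N) = √(6/(2^N·(N+1)(N+2)(N+3)))·Σ_m m²/√( ((N+1−m)/2)! · ((N+1+m)/2)! ), where the sum runs over integers m with 1 ≤ m ≤ N+1 and m ≡ N+1 (mod 2) (so that (N+1±m)/2 are nonnegative integers). Then T(N) converges to 0 as N → ∞. -/

import Mathlib

open Finset Filter

/-- The square-root fidelity between the resource state of non-optimal
probabilistic qubit PBT (N maximally entangled pairs) and the optimal
probabilistic resource state:
`T(N) = √(6/(2^N·(N+1)(N+2)(N+3)))·Σ_m m²/√(((N+1−m)/2)!·((N+1+m)/2)!)`,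
the sum over integers `1 ≤ m ≤ N+1` with `m ≡ N+1 (mod 2)` (so the factorial
arguments are the nonnegative integers `(N+1−m)/2` and `(N+1+m)/2`). -/
noncomputable def Tfid (N : ℕ) : ℝ :=
  Real.sqrt (6 / ((2 : ℝ) ^ N * ((N : ℝ) + 1) * ((N : ℝ) + 2) * ((N : ℝ) + 3))) *
    ∑ m ∈ (Finset.Icc 1 (N + 1)).filter (fun m => m % 2 = (N + 1) % 2),
      (m : ℝ) ^ 2 /
        Real.sqrt ((Nat.factorial ((N + 1 - m) / 2) : ℝ) *
          (Nat.factorial ((N + 1 + m) / 2) : ℝ))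

/-!
The crude estimate already suffices: every factorial is at least `1`, so each of the at most
`N + 1` summands is at most `(N + 1)²`, while the prefactor is at most `√6 / √2 ^ N`. Hence
`T(N) ≤ √6 (N + 1)³ / √2 ^ N`, and exponential decay beats polynomial growth.
-/

open Topology

lemma one_le_sqrt_factorial_mul (a b : ℕ) :
    1 ≤ Real.sqrt ((a.factorial : ℝ) * b.factorial) := by
  have ha : (1 : ℝ) ≤ a.factorial := by exact_mod_cast a.factorial_pos
  have hb : (1 : ℝ) ≤ b.factorial := by exact_mod_cast b.factorial_pos
  exact Real.one_le_sqrt.mpr (one_le_mul_of_one_le_of_one_le ha hb)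

lemma sum_sq_div_le_pow_three {s : Finset ℕ} {n : ℕ} (hs : s ⊆ Icc 1 n) {f : ℕ → ℝ}
    (hf : ∀ m ∈ s, 1 ≤ f m) : ∑ m ∈ s, (m : ℝ) ^ 2 / f m ≤ (n : ℝ) ^ 3 := by
  have hterm : ∀ m ∈ s, (m : ℝ) ^ 2 / f m ≤ (n : ℝ) ^ 2 := fun m hm => by
    have hmn : (m : ℝ) ≤ n := by exact_mod_cast (mem_Icc.mp (hs hm)).2
    calc (m : ℝ) ^ 2 / f m ≤ (m : ℝ) ^ 2 := div_le_self (sq_nonneg _) (hf m hm)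
      _ ≤ (n : ℝ) ^ 2 := by gcongr
  have hcard : (s.card : ℝ) ≤ n := by
    exact_mod_cast (card_le_card hs).trans (Nat.card_Icc 1 n).le
  calc ∑ m ∈ s, (m : ℝ) ^ 2 / f m ≤ s.card • (n : ℝ) ^ 2 := sum_le_card_nsmul _ _ _ hterm
    _ ≤ (n : ℝ) * (n : ℝ) ^ 2 := by rw [nsmul_eq_mul]; gcongr
    _ = (n : ℝ) ^ 3 := by ring

lemma sqrt_pow_eq_pow_sqrt {x : ℝ} (hx : 0 ≤ x) (n : ℕ) :
    Real.sqrt (x ^ n) = Real.sqrt x ^ n := by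
  rw [← Real.sqrt_sq (pow_nonneg (Real.sqrt_nonneg x) n), ← pow_mul, mul_comm, pow_mul,
    Real.sq_sqrt hx]

lemma tendsto_succ_pow_div_pow_atTop {r : ℝ} (hr : 1 < r) (k : ℕ) :
    Tendsto (fun n : ℕ => ((n : ℝ) + 1) ^ k / r ^ n) atTop (𝓝 0) := by
  have hshift : Tendsto (fun n : ℕ => ((n + 1 : ℕ) : ℝ) ^ k / r ^ (n + 1)) atTop (𝓝 0) :=
    (tendsto_pow_const_div_const_pow_of_one_lt k hr).comp (tendsto_add_atTop_nat 1)
  convert hshift.const_mul r using 2 with n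
  · push_cast
    field_simp [(by positivity : r ≠ 0)]
    ring
  · rw [mul_zero]

lemma Tfid_nonneg (N : ℕ) : 0 ≤ Tfid N :=
  mul_nonneg (Real.sqrt_nonneg _)
    (sum_nonneg fun _ _ => div_nonneg (sq_nonneg _) (Real.sqrt_nonneg _))

lemma Tfid_le (N : ℕ) : Tfid N ≤ Real.sqrt 6 * (((N : ℝ) + 1) ^ 3 / Real.sqrt 2 ^ N) := by
  have hprefactor :
      Real.sqrt (6 / ((2 : ℝ) ^ N * ((N : ℝ) + 1) * ((N : ℝ) + 2) * ((N : ℝ) + 3)))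
        ≤ Real.sqrt 6 / Real.sqrt 2 ^ N := by
    rw [← sqrt_pow_eq_pow_sqrt zero_le_two, ← Real.sqrt_div' _ (by positivity)]
    refine Real.sqrt_le_sqrt (div_le_div_of_nonneg_left (by norm_num) (by positivity) ?_)
    have hpoly : (1 : ℝ) ≤ ((N : ℝ) + 1) * ((N : ℝ) + 2) * ((N : ℝ) + 3) := by
      have h0 : (0 : ℝ) ≤ N := N.cast_nonneg
      nlinarith [mul_nonneg h0 h0, mul_nonneg (mul_nonneg h0 h0) h0]
    rw [mul_assoc, mul_assoc, ← mul_assoc (((N : ℝ) + 1))]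
    exact le_mul_of_one_le_right (by positivity) hpoly
  have hsum := sum_sq_div_le_pow_three (filter_subset (fun m => m % 2 = (N + 1) % 2) (Icc 1 (N + 1)))
    (fun m _ => one_le_sqrt_factorial_mul ((N + 1 - m) / 2) ((N + 1 + m) / 2))
  push_cast at hsum
  calc Tfid N ≤ Real.sqrt 6 / Real.sqrt 2 ^ N * ((N : ℝ) + 1) ^ 3 :=
        mul_le_mul hprefactor hsum
          (sum_nonneg fun _ _ => div_nonneg (sq_nonneg _) (Real.sqrt_nonneg _)) (by positivity)
    _ = Real.sqrt 6 * (((N : ℝ) + 1) ^ 3 / Real.sqrt 2 ^ N) := by ring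

/-- `T(N)` converges to `0` as `N → ∞`. -/
theorem Tfid_tendsto_zero : Tendsto Tfid atTop (nhds 0) := by
  have hbound := (tendsto_succ_pow_div_pow_atTop Real.one_lt_sqrt_two 3).const_mul (Real.sqrt 6)
  rw [mul_zero] at hbound
  exact squeeze_zero Tfid_nonneg Tfid_le hbound
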